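/- Suppose (f_j^R, f_j^I) satisfy condition H2 with constants λ_j^{RR}, λ_j^{RI}, λ_j^{IR}, λ_j^{II} and (g_j^R, g_j^I) satisfy condition H2 with constants μ_j^{RR}, μ_j^{RI}, μ_j^{IR}, μ_j^{II}, for j = 1,…,n. Suppose there exist positive reals ξ_1,…,ξ_n, φ_1,…,φ_n such that for every k = 1,…,n both: (i) −ξ_k d_k + [Σ_{j=1}^n ξ_j|a_{jk}^R| + Σ_{j=1}^n φ_j|a_{jk}^I|] λ_k^{RR} + [Σ_{j=1}^n ξ_j|a_{jk}^I| + Σ_{j=1}^n φ_j|a_{jk}^R|] λ_k^{IR} + Σ_{j=1}^n [ξ_j(|b_{jk}^R|μ_k^{RR} + |b_{jk}^I|μ_k^{IR}) + φ_j(|b_{jk}^R|μ_k^{IR} + |b_{jk}^I|μ_k^{RR})] < 0, and (ii) −φ_k d_k + [Σ_{j=1}^n φ_j|a_{jk}^R| + Σ_{j=1}^n ξ_j|a_{jk}^I|] λ_k^{II} + [Σ_{j=1}^n φ_j|a_{jk}^I| + Σ_{j=1}^n ξ_j|a_{jk}^R|] λ_k^{RI} + Σ_{j=1}^n [ξ_j(|b_{jk}^R|μ_k^{RI}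 + |b_{jk}^I|μ_k^{II}) + φ_j(|b_{jk}^R|μ_k^{II} + |b_{jk}^I|μ_k^{RI})] < 0. If the network admits at least one solution, then it has exactly one equilibrium Z̄ ∈ ℝ^{2n}, and for every solution Z(t) there exist constants c > 0 and δ > 0 such that ‖Z(t) − Z̄‖ ≤ c e^{−δt} (Euclidean norm) for all t ≥ 0. -/

import Mathlib

/-!
In real coordinates indexed by `Fin n ⊕ Fin n`, condition H2 and the mean value theorem make every
coupling term Lipschitz, with a nonnegative matrix of constants (`lipMatrix`), and conditions (i),
(ii) say that the column sums of these matrices, weighted by `ξ, φ`, are dominated by the weighted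
decay rates `ξₖ dₖ, φₖ dₖ`. In the weighted ℓ¹ norm this makes `z ↦ D⁻¹ N(z)` a contraction, whose
unique fixed point is the equilibrium. The error `e = Z - Z̄` of a solution satisfies
`|eᵢ' + dᵢ eᵢ| ≤ Σₖ Aᵢₖ |eₖ(t)| + Σₖ Bᵢₖ |eₖ(t - τᵢₖ)|`; for small `δ > 0` the Lyapunov–Krasovskii
functional `Σᵢ wᵢ e^{δt} |eᵢ(t)| + Σᵢₖ wᵢ Bᵢₖ e^{δτᵢₖ} ∫_{t-τᵢₖ}^t e^{δs} |eₖ(s)| ds` has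
nonpositive right derivative, so `Σᵢ wᵢ |eᵢ(t)| = O(e^{-δt})`.
-/

open Finset

/-- A solution of the delayed complex-valued network, decomposed into real and
imaginary parts. -/
def IsSolution (n : ℕ) (d : Fin n → ℝ)
    (aR aI bR bI τ : Fin n → Fin n → ℝ)
    (uR uI : Fin n → ℝ)
    (fR fI gR gI : Fin n → ℝ → ℝ → ℝ)
    (zR zI : Fin n → ℝ → ℝ) : Prop :=
  (∀ j, ContDiff ℝ 1 (zR j)) ∧ (∀ j, ContDiff ℝ 1 (zI j)) ∧
  (∀ j : Fin n, ∀ t : ℝ, 0 ≤ t →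
    deriv (zR j) t =
      -(d j) * zR j t
      + (∑ k, (aR j k * fR k (zR k t) (zI k t) - aI j k * fI k (zR k t) (zI k t)))
      + (∑ k, (bR j k * gR k (zR k (t - τ j k)) (zI k (t - τ j k))
               - bI j k * gI k (zR k (t - τ j k)) (zI k (t - τ j k))))
      + uR j) ∧
  (∀ j : Fin n, ∀ t : ℝ, 0 ≤ t →
    deriv (zI j) t =
      -(d j) * zI j t
      + (∑ k, (aR j k * fI k (zR k t) (zI k t) + aI j k * fR k (zR k t) (zI k t)))
      + (∑ k, (bR j k * gI k (zR k (t - τ j k)) (zI k (t - τ j k))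
               + bI j k * gR k (zR k (t - τ j k)) (zI k (t - τ j k))))
      + uI j)

/-- An equilibrium of the network: a point of ℝ^{2n} at which both right-hand
sides vanish. -/
def IsEquilibrium (n : ℕ) (d : Fin n → ℝ)
    (aR aI bR bI : Fin n → Fin n → ℝ)
    (uR uI : Fin n → ℝ)
    (fR fI gR gI : Fin n → ℝ → ℝ → ℝ)
    (zbR zbI : Fin n → ℝ) : Prop :=
  (∀ j : Fin n,
    -(d j) * zbR j
    + (∑ k, (aR j k * fR k (zbR k) (zbI k) - aI j k * fI k (zbR k) (zbI k)))
    + (∑ k, (bR j k * gR k (zbR k) (zbI k) - bI j k * gI k (zbR k) (zbI k)))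
    + uR j = 0) ∧
  (∀ j : Fin n,
    -(d j) * zbI j
    + (∑ k, (aR j k * fI k (zbR k) (zbI k) + aI j k * fR k (zbR k) (zbI k)))
    + (∑ k, (bR j k * gI k (zbR k) (zbI k) + bI j k * gR k (zbR k) (zbI k)))
    + uI j = 0)

/-- Condition H1: continuously differentiable with positive, bounded partial
derivatives. -/
def CondH1 (f1 f2 : ℝ → ℝ → ℝ) (lRR lRI lIR lII : ℝ) : Prop :=
  ContDiff ℝ 1 (fun p : ℝ × ℝ => f1 p.1 p.2) ∧
  ContDiff ℝ 1 (fun p : ℝ × ℝ => f2 p.1 p.2) ∧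
  (∀ x y : ℝ,
    (0 < deriv (fun s => f1 s y) x ∧ deriv (fun s => f1 s y) x ≤ lRR) ∧
    (0 < deriv (fun s => f1 x s) y ∧ deriv (fun s => f1 x s) y ≤ lRI) ∧
    (0 < deriv (fun s => f2 s y) x ∧ deriv (fun s => f2 s y) x ≤ lIR) ∧
    (0 < deriv (fun s => f2 x s) y ∧ deriv (fun s => f2 x s) y ≤ lII))

/-- Condition H2: continuously differentiable with bounded partial derivatives. -/
def CondH2 (g1 g2 : ℝ → ℝ → ℝ) (mRR mRI mIR mII : ℝ) : Prop :=
  ContDiff ℝ 1 (fun p : ℝ × ℝ => g1 p.1 p.2) ∧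
  ContDiff ℝ 1 (fun p : ℝ × ℝ => g2 p.1 p.2) ∧
  (∀ x y : ℝ,
    |deriv (fun s => g1 s y) x| ≤ mRR ∧
    |deriv (fun s => g1 x s) y| ≤ mRI ∧
    |deriv (fun s => g2 s y) x| ≤ mIR ∧
    |deriv (fun s => g2 x s) y| ≤ mII)

open Filter Topology Set Real
open scoped NNReal

theorem existsUnique_fixedPoint_of_weighted_sum_contraction {ι : Type*} [Fintype ι]
    {ν : ι → ℝ} (hν : ∀ i, 0 < ν i) {q : ℝ≥0} (hq : q < 1) {P : (ι → ℝ) → ι → ℝ}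
    (hP : ∀ z z', ∑ i, ν i * |P z i - P z' i| ≤ q * ∑ i, ν i * |z i - z' i|) :
    ∃! z, P z = z := by
  -- conjugated by the scaling `z ↦ ν * z`, `P` becomes a contraction of `ℓ¹`
  let scale : (ι → ℝ) → PiLp 1 (fun _ : ι => ℝ) := fun z => WithLp.toLp 1 (ν * z)
  let unscale : PiLp 1 (fun _ : ι => ℝ) → ι → ℝ := fun y i => y i / ν i
  have hscale : ∀ y, scale (unscale y) = y := fun y => by
    ext i
    simp [scale, unscale, mul_div_cancel₀ _ (hν i).ne']
  have hunscale : ∀ z, unscale (scale z) = z := fun z => by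
    ext i
    simp [scale, unscale, mul_div_cancel_left₀ _ (hν i).ne']
  have hdist : ∀ z z', ∑ i, ν i * |z i - z' i| = dist (scale z) (scale z') := fun z z' => by
    simp only [scale, PiLp.dist_eq_of_L1, Real.dist_eq, Pi.mul_apply, ← mul_sub, abs_mul,
      abs_of_pos (hν _)]
  have hQ : ContractingWith q (scale ∘ P ∘ unscale) := by
    refine ⟨hq, LipschitzWith.of_dist_le_mul fun y y' => ?_⟩
    simpa only [hdist, hscale, Function.comp_apply] using hP (unscale y) (unscale y')
  refine ⟨unscale (ContractingWith.fixedPoint _ hQ), ?_, fun w hw => ?_⟩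
  · have h : scale (P _) = _ := ContractingWith.fixedPoint_isFixedPt hQ
    change P _ = _
    rw [← hunscale (P _), h]
  · rw [← ContractingWith.fixedPoint_unique hQ (x := scale w) (by
      simp only [Function.IsFixedPt, Function.comp_apply, hunscale, hw]), hunscale]

theorem exists_lt_one_forall_le_mul {ι : Type*} [Finite ι] {a b : ι → ℝ}
    (hb : ∀ i, 0 < b i) (hab : ∀ i, a i < b i) : ∃ q : ℝ≥0, q < 1 ∧ ∀ i, a i ≤ q * b i := by
  have hev : ∀ i, ∀ᶠ q in 𝓝 (1 : ℝ), a i / b i < q := fun i =>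
    eventually_gt_nhds ((div_lt_one (hb i)).2 (hab i))
  obtain ⟨q, hq, hq01⟩ :=
    (((eventually_all.2 hev).filter_mono nhdsWithin_le_nhds).and
      (Ioo_mem_nhdsLT zero_lt_one)).exists
  exact ⟨⟨q, hq01.1.le⟩, NNReal.coe_lt_coe.1 hq01.2,
    fun i => ((div_lt_iff₀ (hb i)).1 (hq i)).le⟩

theorem existsUnique_mul_eq_of_colSum_lt {ι : Type*} [Fintype ι] {w D : ι → ℝ}
    {C : ι → ι → ℝ} {N : (ι → ℝ) → ι → ℝ} (hw : ∀ i, 0 < w i) (hD : ∀ i, 0 < D i)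
    (hN : ∀ z z' i, |N z i - N z' i| ≤ ∑ k, C i k * |z k - z' k|)
    (hcol : ∀ k, ∑ i, w i * C i k < w k * D k) :
    ∃! z : ι → ℝ, ∀ i, D i * z i = N z i := by
  obtain ⟨q, hq, hqC⟩ := exists_lt_one_forall_le_mul (fun k => mul_pos (hw k) (hD k)) hcol
  have hfix : ∀ z : ι → ℝ, (∀ i, D i * z i = N z i) ↔ (fun i => N z i / D i) = z := fun z => by
    simp only [funext_iff, div_eq_iff (hD _).ne', eq_comm (a := N z _), mul_comm (z _)]
  simp only [hfix]
  refine existsUnique_fixedPoint_of_weighted_sum_contraction (fun i => mul_pos (hw i) (hD i))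
    hq fun z z' => ?_
  calc ∑ i, w i * D i * |N z i / D i - N z' i / D i| = ∑ i, w i * |N z i - N z' i| := by
        refine sum_congr rfl fun i _ => ?_
        rw [← sub_div, abs_div, abs_of_pos (hD i), mul_assoc, mul_div_cancel₀ _ (hD i).ne']
    _ ≤ ∑ i, w i * ∑ k, C i k * |z k - z' k| := by
        gcongr with i
        exacts [(hw i).le, hN z z' i]
    _ = ∑ k, (∑ i, w i * C i k) * |z k - z' k| := by
        simp only [mul_sum, sum_mul, mul_assoc]
        exact sum_comm
    _ ≤ ∑ k, q * (w k * D k) * |z k - z' k| := by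
        gcongr with k
        exact hqC k
    _ = q * ∑ k, w k * D k * |z k - z' k| := by
        simp only [mul_sum, mul_assoc]

noncomputable def absRightDeriv (a e : ℝ) : ℝ :=
  if a = 0 then |e| else if 0 < a then e else -e

theorem absRightDeriv_le (a e D : ℝ) : absRightDeriv a e ≤ |e + D * a| - D * |a| := by
  unfold absRightDeriv
  split_ifs with h0 hpos
  · simp [h0]
  · rw [abs_of_pos hpos]
    linarith [le_abs_self (e + D * a)]
  · rw [abs_of_neg (lt_of_le_of_ne (not_lt.1 hpos) h0)]
    linarith [neg_abs_le (e + D * a)]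

theorem HasDerivAt.hasDerivWithinAt_abs_Ici {g : ℝ → ℝ} {e t : ℝ} (hg : HasDerivAt g e t) :
    HasDerivWithinAt (fun s => |g s|) (absRightDeriv (g t) e) (Ici t) t := by
  unfold absRightDeriv
  split_ifs with h0 hpos
  · rw [hasDerivWithinAt_iff_tendsto_slope, Ici_sdiff_left]
    have hslope : Tendsto (slope g t) (𝓝[>] t) (𝓝 e) :=
      (hasDerivAt_iff_tendsto_slope.1 hg).mono_left
        (nhdsWithin_mono t fun s hs => ne_of_gt (mem_Ioi.1 hs))
    refine ((continuous_abs.tendsto e).comp hslope).congr' ?_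
    filter_upwards [self_mem_nhdsWithin] with s hs
    simp only [Function.comp_apply, slope_def_field, h0, abs_zero, sub_zero, abs_div,
      abs_of_pos (sub_pos.2 (mem_Ioi.1 hs))]
  · refine (hg.congr_of_eventuallyEq ?_).hasDerivWithinAt
    filter_upwards [hg.continuousAt.eventually (eventually_gt_nhds hpos)] with s hs
    exact abs_of_pos hs
  · have hneg : g t < 0 := lt_of_le_of_ne (not_lt.1 hpos) h0
    refine (hg.neg.congr_of_eventuallyEq ?_).hasDerivWithinAt
    filter_upwards [hg.continuousAt.eventually (eventually_lt_nhds hneg)] with s hs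
    exact abs_of_neg hs

theorem hasDerivAt_integral_sub_delay {h : ℝ → ℝ} (hh : Continuous h) (τ t : ℝ) :
    HasDerivAt (fun t => ∫ s in (t - τ)..t, h s) (h t - h (t - τ)) t := by
  have hprim : ∀ b, HasDerivAt (fun u => ∫ s in (0 : ℝ)..u, h s) (h b) b := fun b =>
    (hh.integral_hasStrictDerivAt 0 b).hasDerivAt
  have hsplit : (fun t => ∫ s in (t - τ)..t, h s)
      = fun t => (∫ s in (0 : ℝ)..t, h s) - ∫ s in (0 : ℝ)..(t - τ), h s := by
    ext t
    rw [intervalIntegral.integral_interval_sub_left (hh.intervalIntegrable _ _)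
      (hh.intervalIntegrable _ _)]
  rw [hsplit]
  simpa using (hprim t).fun_sub ((hprim (t - τ)).comp t ((hasDerivAt_id t).sub_const τ))

theorem exists_bound_weighted_sum_of_delay_diffIneq {ι : Type*} [Fintype ι] {w c : ι → ℝ}
    {A B τ : ι → ι → ℝ} {y y' : ι → ℝ → ℝ} (hw : ∀ i, 0 ≤ w i) (hB : ∀ i k, 0 ≤ B i k)
    (hτ : ∀ i k, 0 ≤ τ i k) (hy : ∀ i, Continuous (y i)) (hy₀ : ∀ i t, 0 ≤ y i t)
    (hy' : ∀ i t, 0 ≤ t → HasDerivWithinAt (y i) (y' i t) (Ici t) t)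
    (hineq : ∀ i t, 0 ≤ t →
      y' i t ≤ -c i * y i t + ∑ k, A i k * y k t + ∑ k, B i k * y k (t - τ i k))
    (hcol : ∀ k, ∑ i, w i * A i k + ∑ i, w i * B i k ≤ w k * c k) :
    ∃ K, ∀ t, 0 ≤ t → ∑ i, w i * y i t ≤ K := by
  -- the memory terms `I i k` absorb the delayed contributions
  set I : ι → ι → ℝ → ℝ := fun i k t => ∫ s in (t - τ i k)..t, y k s
  have hI : ∀ i k t, HasDerivAt (I i k) (y k t - y k (t - τ i k)) t := fun i k t =>
    hasDerivAt_integral_sub_delay (hy k) _ t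
  have hI₀ : ∀ i k t, 0 ≤ I i k t := fun i k t =>
    intervalIntegral.integral_nonneg (by linarith [hτ i k]) fun s _ => hy₀ k s
  set V : ℝ → ℝ := fun t => ∑ i, w i * y i t + ∑ i, ∑ k, w i * B i k * I i k t
  set V' : ℝ → ℝ := fun t =>
    ∑ i, w i * y' i t + ∑ i, ∑ k, w i * B i k * (y k t - y k (t - τ i k))
  have hVc : Continuous V := by
    have hIc : ∀ i k, Continuous (I i k) := fun i k =>
      continuous_iff_continuousAt.2 fun t => (hI i k t).continuousAt
    fun_prop
  have hV' : ∀ t, 0 ≤ t → HasDerivWithinAt V (V' t) (Ici t) t := fun t ht =>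
    (HasDerivWithinAt.fun_sum fun i _ => (hy' i t ht).const_mul (w i)).add
      (HasDerivWithinAt.fun_sum fun i _ => HasDerivWithinAt.fun_sum fun k _ =>
        ((hI i k t).const_mul _).hasDerivWithinAt)
  have hV'_nonpos : ∀ t, 0 ≤ t → V' t ≤ 0 := by
    intro t ht
    have hrow : ∀ i, w i * y' i t + ∑ k, w i * B i k * (y k t - y k (t - τ i k))
        ≤ -(w i * c i * y i t) + ∑ k, (w i * A i k + w i * B i k) * y k t := by
      intro i
      have hsum : ∑ k, (w i * A i k + w i * B i k) * y k t
          = w i * ∑ k, A i k * y k t + w i * ∑ k, B i k * y k (t - τ i k)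
            + ∑ k, w i * B i k * (y k t - y k (t - τ i k)) := by
        simp only [mul_sum, ← sum_add_distrib]
        exact sum_congr rfl fun k _ => by ring
      linarith [mul_le_mul_of_nonneg_left (hineq i t ht) (hw i)]
    calc V' t ≤ ∑ i, (-(w i * c i * y i t) + ∑ k, (w i * A i k + w i * B i k) * y k t) :=
          sum_add_distrib.symm.trans_le (sum_le_sum fun i _ => hrow i)
      _ = ∑ k, (∑ i, w i * A i k + ∑ i, w i * B i k - w k * c k) * y k t := by
          simp only [sum_add_distrib, sum_neg_distrib, sub_mul, sum_sub_distrib, add_mul,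
            sum_mul]
          rw [sum_comm (f := fun i k => w i * A i k * y k t),
            sum_comm (f := fun i k => w i * B i k * y k t)]
          ring
      _ ≤ 0 := sum_nonpos fun k _ =>
          mul_nonpos_of_nonpos_of_nonneg (by linarith [hcol k]) (hy₀ k t)
  have hV_le : ∀ t, 0 ≤ t → V t ≤ V 0 := fun t ht =>
    image_le_of_deriv_right_le_deriv_boundary (B := fun _ => V 0) hVc.continuousOn
      (fun s hs => hV' s hs.1) le_rfl continuousOn_const
      (fun s _ => hasDerivWithinAt_const s _ (V 0))
      (fun s hs => hV'_nonpos s hs.1) ⟨ht, le_rfl⟩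
  exact ⟨V 0, fun t ht => (le_add_of_nonneg_right (sum_nonneg fun i _ => sum_nonneg fun k _ =>
    mul_nonneg (mul_nonneg (hw i) (hB i k)) (hI₀ i k t))).trans (hV_le t ht)⟩

theorem exists_pos_forall_colSum_exp_le {ι : Type*} [Fintype ι] {w D : ι → ℝ}
    {A B τ : ι → ι → ℝ} (hcol : ∀ k, ∑ i, w i * A i k + ∑ i, w i * B i k < w k * D k) :
    ∃ δ > 0, ∀ k, ∑ i, w i * A i k + ∑ i, w i * (B i k * exp (δ * τ i k)) ≤ w k * (D k - δ) := by
  have hev : ∀ k, ∀ᶠ δ in 𝓝 (0 : ℝ),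
      ∑ i, w i * A i k + ∑ i, w i * (B i k * exp (δ * τ i k)) + w k * δ < w k * D k := by
    intro k
    have hc : Continuous fun δ : ℝ =>
        ∑ i, w i * A i k + ∑ i, w i * (B i k * exp (δ * τ i k)) + w k * δ := by
      fun_prop
    exact hc.continuousAt.eventually_lt continuousAt_const (by simpa using hcol k)
  obtain ⟨δ, hδ, hδ₀⟩ :=
    (((eventually_all.2 hev).filter_mono nhdsWithin_le_nhds).and
      (self_mem_nhdsWithin (s := Ioi (0 : ℝ)))).exists
  exact ⟨δ, hδ₀, fun k => by linarith [hδ k, mul_sub (w k) (D k) δ]⟩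

theorem exp_mul_absRightDeriv_le {ι : Type*} [Fintype ι] {D : ι → ℝ} {A B τ : ι → ι → ℝ}
    {x : ι → ℝ → ℝ} {i : ι} {t : ℝ} (δ : ℝ)
    (hode : |deriv (x i) t + D i * x i t|
      ≤ ∑ k, A i k * |x k t| + ∑ k, B i k * |x k (t - τ i k)|) :
    exp (δ * t) * (δ * |x i t| + absRightDeriv (x i t) (deriv (x i) t))
      ≤ -(D i - δ) * (exp (δ * t) * |x i t|) + ∑ k, A i k * (exp (δ * t) * |x k t|)
        + ∑ k, B i k * exp (δ * τ i k) * (exp (δ * (t - τ i k)) * |x k (t - τ i k)|) := by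
  have hA : ∑ k, A i k * (exp (δ * t) * |x k t|) = exp (δ * t) * ∑ k, A i k * |x k t| := by
    rw [mul_sum]
    exact sum_congr rfl fun k _ => by ring
  have hB : ∑ k, B i k * exp (δ * τ i k) * (exp (δ * (t - τ i k)) * |x k (t - τ i k)|)
      = exp (δ * t) * ∑ k, B i k * |x k (t - τ i k)| := by
    rw [mul_sum]
    refine sum_congr rfl fun k _ => ?_
    rw [show exp (δ * t) = exp (δ * τ i k) * exp (δ * (t - τ i k)) by rw [← exp_add]; ring_nf]
    ring
  rw [hA, hB]
  have := mul_le_mul_of_nonneg_left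
    ((absRightDeriv_le (x i t) (deriv (x i) t) (D i)).trans (sub_le_sub_right hode _))
    (exp_pos (δ * t)).le
  linarith

theorem exists_weighted_sum_abs_le_exp_of_delay_diffIneq {ι : Type*} [Fintype ι]
    {w D : ι → ℝ} {A B τ : ι → ι → ℝ} {x : ι → ℝ → ℝ} (hw : ∀ i, 0 ≤ w i)
    (hB : ∀ i k, 0 ≤ B i k) (hτ : ∀ i k, 0 ≤ τ i k) (hx : ∀ i, Differentiable ℝ (x i))
    (hode : ∀ i t, 0 ≤ t →
      |deriv (x i) t + D i * x i t| ≤ ∑ k, A i k * |x k t| + ∑ k, B i k * |x k (t - τ i k)|)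
    (hcol : ∀ k, ∑ i, w i * A i k + ∑ i, w i * B i k < w k * D k) :
    ∃ c δ : ℝ, 0 < c ∧ 0 < δ ∧ ∀ t, 0 ≤ t → ∑ i, w i * |x i t| ≤ c * exp (-δ * t) := by
  obtain ⟨δ, hδ, hmargin⟩ := exists_pos_forall_colSum_exp_le hcol
  -- `e^{δt} |xᵢ(t)|` satisfies a non-strict delay inequality, hence stays bounded
  obtain ⟨K, hK⟩ := exists_bound_weighted_sum_of_delay_diffIneq (c := fun i => D i - δ) (A := A)
    (B := fun i k => B i k * exp (δ * τ i k)) (y := fun i t => exp (δ * t) * |x i t|)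
    (y' := fun i t => exp (δ * t) * (δ * |x i t| + absRightDeriv (x i t) (deriv (x i) t)))
    hw (fun i k => mul_nonneg (hB i k) (exp_pos _).le) hτ
    (fun i => by have := (hx i).continuous; fun_prop) (fun i t => by positivity)
    (fun i t _ => (((hasDerivAt_id t).const_mul δ).exp.hasDerivWithinAt.mul
      ((hx i t).hasDerivAt.hasDerivWithinAt_abs_Ici)).congr_deriv (by simp only [id]; ring))
    (fun i t ht => exp_mul_absRightDeriv_le δ (hode i t ht)) hmargin
  refine ⟨max K 1, δ, by positivity, hδ, fun t ht => ?_⟩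
  have hexp : ∑ i, w i * |x i t| = exp (-δ * t) * ∑ i, w i * (exp (δ * t) * |x i t|) := by
    rw [mul_sum]
    refine sum_congr rfl fun i _ => ?_
    rw [show exp (-δ * t) * (w i * (exp (δ * t) * |x i t|))
      = w i * |x i t| * (exp (-δ * t) * exp (δ * t)) by ring, ← exp_add]
    simp
  rw [hexp, mul_comm]
  gcongr
  exact (hK t ht).trans (le_max_left _ _)

theorem exists_sqrt_sum_sq_le_mul_weighted_sum {ι : Type*} [Fintype ι] {w : ι → ℝ}
    (hw : ∀ i, 0 < w i) : ∃ C > 0, ∀ v : ι → ℝ, √(∑ i, v i ^ 2) ≤ C * ∑ i, w i * |v i| := by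
  have hinv : 0 ≤ ∑ i, (w i)⁻¹ := sum_nonneg fun i _ => (inv_pos.2 (hw i)).le
  refine ⟨∑ i, (w i)⁻¹ + 1, by linarith, fun v => ?_⟩
  set S := ∑ i, w i * |v i|
  have hS : 0 ≤ S := sum_nonneg fun i _ => mul_nonneg (hw i).le (abs_nonneg _)
  have habs : ∀ i, |v i| ≤ (w i)⁻¹ * S := fun i => by
    rw [le_inv_mul_iff₀ (hw i)]
    exact single_le_sum (f := fun i => w i * |v i|)
      (fun j _ => mul_nonneg (hw j).le (abs_nonneg _)) (mem_univ i)
  calc √(∑ i, v i ^ 2) ≤ ∑ i, |v i| := Real.sqrt_le_iff.2 ⟨sum_nonneg fun i _ => abs_nonneg _,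
        by simpa only [sq_abs] using sum_sq_le_sq_sum_of_nonneg fun i _ => abs_nonneg (v i)⟩
    _ ≤ (∑ i, (w i)⁻¹) * S := by
        rw [sum_mul]
        exact sum_le_sum fun i _ => habs i
    _ ≤ (∑ i, (w i)⁻¹ + 1) * S := by linarith

theorem abs_sub_le_of_abs_partialDeriv_le {f : ℝ → ℝ → ℝ} {m₁ m₂ : ℝ}
    (hf : Differentiable ℝ (fun p : ℝ × ℝ => f p.1 p.2))
    (h₁ : ∀ x y, |deriv (fun s => f s y) x| ≤ m₁) (h₂ : ∀ x y, |deriv (fun s => f x s) y| ≤ m₂)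
    (x y x' y' : ℝ) : |f x y - f x' y'| ≤ m₁ * |x - x'| + m₂ * |y - y'| := by
  have hx : |f x y - f x' y| ≤ m₁ * |x - x'| :=
    Convex.norm_image_sub_le_of_norm_deriv_le (f := fun s => f s y)
      (fun s _ => (hf.comp (differentiable_id.prodMk (differentiable_const y))).differentiableAt)
      (fun s _ => h₁ s y) convex_univ (Set.mem_univ x') (Set.mem_univ x)
  have hy : |f x' y - f x' y'| ≤ m₂ * |y - y'| :=
    Convex.norm_image_sub_le_of_norm_deriv_le (f := fun s => f x' s)
      (fun s _ => (hf.comp ((differentiable_const x').prodMk differentiable_id)).differentiableAt)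
      (fun s _ => h₂ x' s) convex_univ (Set.mem_univ y') (Set.mem_univ y)
  calc |f x y - f x' y'| ≤ |f x y - f x' y| + |f x' y - f x' y'| := abs_sub_le _ _ _
    _ ≤ m₁ * |x - x'| + m₂ * |y - y'| := add_le_add hx hy

theorem CondH2.abs_sub_le_fst {g₁ g₂ : ℝ → ℝ → ℝ} {mRR mRI mIR mII : ℝ}
    (h : CondH2 g₁ g₂ mRR mRI mIR mII) (x y x' y' : ℝ) :
    |g₁ x y - g₁ x' y'| ≤ mRR * |x - x'| + mRI * |y - y'| :=
  abs_sub_le_of_abs_partialDeriv_le (h.1.differentiable one_ne_zero)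
    (fun x y => (h.2.2 x y).1) (fun x y => (h.2.2 x y).2.1) x y x' y'

theorem CondH2.abs_sub_le_snd {g₁ g₂ : ℝ → ℝ → ℝ} {mRR mRI mIR mII : ℝ}
    (h : CondH2 g₁ g₂ mRR mRI mIR mII) (x y x' y' : ℝ) :
    |g₂ x y - g₂ x' y'| ≤ mIR * |x - x'| + mII * |y - y'| :=
  abs_sub_le_of_abs_partialDeriv_le (h.2.1.differentiable one_ne_zero)
    (fun x y => (h.2.2 x y).2.2.1) (fun x y => (h.2.2 x y).2.2.2) x y x' y'

theorem CondH2.nonneg {g₁ g₂ : ℝ → ℝ → ℝ} {mRR mRI mIR mII : ℝ}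
    (h : CondH2 g₁ g₂ mRR mRI mIR mII) : 0 ≤ mRR ∧ 0 ≤ mRI ∧ 0 ≤ mIR ∧ 0 ≤ mII :=
  have h₀ := h.2.2 0 0
  ⟨(abs_nonneg _).trans h₀.1, (abs_nonneg _).trans h₀.2.1, (abs_nonneg _).trans h₀.2.2.1,
    (abs_nonneg _).trans h₀.2.2.2⟩

section Network

variable {n : ℕ}

/-- Row `i` of `Σₖ aⱼₖ fₖ(zₖ)` for `aⱼₖ = aR j k + i aI j k` and `fₖ = fR k + i fI k`:
`inl j` is the real part of row `j`, `inr j` its imaginary part. -/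
def coupling (aR aI : Fin n → Fin n → ℝ) (fR fI : Fin n → ℝ → ℝ → ℝ) :
    Fin n ⊕ Fin n → (Fin n ⊕ Fin n → ℝ) → ℝ
  | .inl j, z => ∑ k, (aR j k * fR k (z (.inl k)) (z (.inr k))
      - aI j k * fI k (z (.inl k)) (z (.inr k)))
  | .inr j, z => ∑ k, (aR j k * fI k (z (.inl k)) (z (.inr k))
      + aI j k * fR k (z (.inl k)) (z (.inr k)))

def lipMatrix (aR aI : Fin n → Fin n → ℝ) (lRR lRI lIR lII : Fin n → ℝ) :
    Fin n ⊕ Fin n → Fin n ⊕ Fin n → ℝ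
  | .inl j, .inl k => |aR j k| * lRR k + |aI j k| * lIR k
  | .inl j, .inr k => |aR j k| * lRI k + |aI j k| * lII k
  | .inr j, .inl k => |aR j k| * lIR k + |aI j k| * lRR k
  | .inr j, .inr k => |aR j k| * lII k + |aI j k| * lRI k

theorem lipMatrix_nonneg {aR aI : Fin n → Fin n → ℝ} {lRR lRI lIR lII : Fin n → ℝ}
    (hRR : ∀ k, 0 ≤ lRR k) (hRI : ∀ k, 0 ≤ lRI k) (hIR : ∀ k, 0 ≤ lIR k)
    (hII : ∀ k, 0 ≤ lII k) (i k : Fin n ⊕ Fin n) : 0 ≤ lipMatrix aR aI lRR lRI lIR lII i k := by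
  rcases i with j | j <;> rcases k with k | k <;> simp only [lipMatrix] <;>
    apply_rules [add_nonneg, mul_nonneg, abs_nonneg]

theorem abs_coupling_sub_le {aR aI : Fin n → Fin n → ℝ} {fR fI : Fin n → ℝ → ℝ → ℝ}
    {lRR lRI lIR lII : Fin n → ℝ} (hf : ∀ k, CondH2 (fR k) (fI k) (lRR k) (lRI k) (lIR k) (lII k))
    (i : Fin n ⊕ Fin n) (z z' : Fin n ⊕ Fin n → ℝ) :
    |coupling aR aI fR fI i z - coupling aR aI fR fI i z'|
      ≤ ∑ k, lipMatrix aR aI lRR lRI lIR lII i k * |z k - z' k| := by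
  rcases i with j | j <;>
    simp only [coupling, lipMatrix, Fintype.sum_sum_type, ← sum_sub_distrib, ← sum_add_distrib] <;>
    refine (abs_sum_le_sum_abs _ _).trans (sum_le_sum fun k _ => ?_) <;>
    have hR := (hf k).abs_sub_le_fst (z (.inl k)) (z (.inr k)) (z' (.inl k)) (z' (.inr k)) <;>
    have hI := (hf k).abs_sub_le_snd (z (.inl k)) (z (.inr k)) (z' (.inl k)) (z' (.inr k)) <;>
    set ΔR := fR k (z (.inl k)) (z (.inr k)) - fR k (z' (.inl k)) (z' (.inr k)) with hΔR <;>
    set ΔI := fI k (z (.inl k)) (z (.inr k)) - fI k (z' (.inl k)) (z' (.inr k)) with hΔI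
  · calc _ = |aR j k * ΔR - aI j k * ΔI| := by rw [hΔR, hΔI]; ring_nf
      _ ≤ |aR j k| * |ΔR| + |aI j k| * |ΔI| := by
          simpa only [abs_mul] using abs_sub (aR j k * ΔR) (aI j k * ΔI)
      _ ≤ _ := by linarith [mul_le_mul_of_nonneg_left hR (abs_nonneg (aR j k)),
            mul_le_mul_of_nonneg_left hI (abs_nonneg (aI j k))]
  · calc _ = |aR j k * ΔI + aI j k * ΔR| := by rw [hΔR, hΔI]; ring_nf
      _ ≤ |aR j k| * |ΔI| + |aI j k| * |ΔR| := by
          simpa only [abs_mul] using abs_add_le (aR j k * ΔI) (aI j k * ΔR)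
      _ ≤ _ := by linarith [mul_le_mul_of_nonneg_left hR (abs_nonneg (aI j k)),
            mul_le_mul_of_nonneg_left hI (abs_nonneg (aR j k))]

variable (d : Fin n → ℝ) (aR aI bR bI τ : Fin n → Fin n → ℝ) (uR uI : Fin n → ℝ)
  (fR fI gR gI : Fin n → ℝ → ℝ → ℝ)

theorem isEquilibrium_iff (zR zI : Fin n → ℝ) :
    IsEquilibrium n d aR aI bR bI uR uI fR fI gR gI zR zI ↔
      ∀ i, Sum.elim d d i * Sum.elim zR zI i = coupling aR aI fR fI i (Sum.elim zR zI)
        + coupling bR bI gR gI i (Sum.elim zR zI) + Sum.elim uR uI i := by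
  simp only [IsEquilibrium, Sum.forall, coupling, Sum.elim_inl, Sum.elim_inr]
  constructor <;> rintro ⟨hR, hI⟩ <;>
    exact ⟨fun j => by linarith [hR j], fun j => by linarith [hI j]⟩

variable {d aR aI bR bI τ uR uI fR fI gR gI}

theorem IsSolution.abs_deriv_add_le {zR zI : Fin n → ℝ → ℝ} {zbR zbI : Fin n → ℝ}
    {lRR lRI lIR lII mRR mRI mIR mII : Fin n → ℝ}
    (hz : IsSolution n d aR aI bR bI τ uR uI fR fI gR gI zR zI)
    (hzb : IsEquilibrium n d aR aI bR bI uR uI fR fI gR gI zbR zbI)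
    (hf : ∀ k, CondH2 (fR k) (fI k) (lRR k) (lRI k) (lIR k) (lII k))
    (hg : ∀ k, CondH2 (gR k) (gI k) (mRR k) (mRI k) (mIR k) (mII k))
    (i : Fin n ⊕ Fin n) (t : ℝ) (ht : 0 ≤ t) :
    let e := fun k s => Sum.elim zR zI k s - Sum.elim zbR zbI k
    |deriv (e i) t + Sum.elim d d i * e i t|
      ≤ ∑ k, lipMatrix aR aI lRR lRI lIR lII i k * |e k t|
        + ∑ k, lipMatrix bR bI mRR mRI mIR mII i k
            * |e k (t - τ (Sum.elim id id i) (Sum.elim id id k))| := by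
  intro e
  set Z := Sum.elim zR zI
  set Zb := Sum.elim zbR zbI
  have hderiv : deriv (Z i) t = -Sum.elim d d i * Z i t + coupling aR aI fR fI i (Z · t)
      + coupling bR bI gR gI i (fun k => Z k (t - τ (Sum.elim id id i) (Sum.elim id id k)))
      + Sum.elim uR uI i := by
    rcases i with j | j
    exacts [hz.2.2.1 j t ht, hz.2.2.2 j t ht]
  have hsplit : deriv (e i) t + Sum.elim d d i * e i t
      = (coupling aR aI fR fI i (Z · t) - coupling aR aI fR fI i Zb)
        + (coupling bR bI gR gI i (fun k => Z k (t - τ (Sum.elim id id i) (Sum.elim id id k)))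
          - coupling bR bI gR gI i Zb) := by
    rw [deriv_sub_const, hderiv]
    linarith [(isEquilibrium_iff d aR aI bR bI uR uI fR fI gR gI zbR zbI).1 hzb i]
  rw [hsplit]
  exact (abs_add_le _ _).trans
    (add_le_add (abs_coupling_sub_le hf i _ _) (abs_coupling_sub_le hg i _ _))

theorem existsUnique_doubled_equilibrium {w : Fin n ⊕ Fin n → ℝ}
    {lRR lRI lIR lII mRR mRI mIR mII : Fin n → ℝ} (hd : ∀ j, 0 < d j) (hw : ∀ i, 0 < w i)
    (hf : ∀ k, CondH2 (fR k) (fI k) (lRR k) (lRI k) (lIR k) (lII k))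
    (hg : ∀ k, CondH2 (gR k) (gI k) (mRR k) (mRI k) (mIR k) (mII k))
    (hcol : ∀ k, ∑ i, w i * lipMatrix aR aI lRR lRI lIR lII i k
      + ∑ i, w i * lipMatrix bR bI mRR mRI mIR mII i k < w k * Sum.elim d d k) :
    ∃! Z : Fin n ⊕ Fin n → ℝ, ∀ i, Sum.elim d d i * Z i
      = coupling aR aI fR fI i Z + coupling bR bI gR gI i Z + Sum.elim uR uI i := by
  refine existsUnique_mul_eq_of_colSum_lt
    (C := fun i k => lipMatrix aR aI lRR lRI lIR lII i k + lipMatrix bR bI mRR mRI mIR mII i k)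
    hw (Sum.forall.2 ⟨hd, hd⟩) (fun z z' i => ?_)
    (fun k => by simpa only [mul_add, sum_add_distrib] using hcol k)
  simp only [add_sub_add_right_eq_sub, add_sub_add_comm, add_mul, sum_add_distrib]
  exact (abs_add_le _ _).trans
    (add_le_add (abs_coupling_sub_le hf i z z') (abs_coupling_sub_le hg i z z'))

theorem IsSolution.exists_weighted_sum_abs_sub_le_exp {zR zI : Fin n → ℝ → ℝ}
    {zbR zbI : Fin n → ℝ} {w : Fin n ⊕ Fin n → ℝ} {lRR lRI lIR lII mRR mRI mIR mII : Fin n → ℝ}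
    (hz : IsSolution n d aR aI bR bI τ uR uI fR fI gR gI zR zI)
    (hzb : IsEquilibrium n d aR aI bR bI uR uI fR fI gR gI zbR zbI) (hτ : ∀ j k, 0 ≤ τ j k)
    (hf : ∀ k, CondH2 (fR k) (fI k) (lRR k) (lRI k) (lIR k) (lII k))
    (hg : ∀ k, CondH2 (gR k) (gI k) (mRR k) (mRI k) (mIR k) (mII k)) (hw : ∀ i, 0 ≤ w i)
    (hcol : ∀ k, ∑ i, w i * lipMatrix aR aI lRR lRI lIR lII i k
      + ∑ i, w i * lipMatrix bR bI mRR mRI mIR mII i k < w k * Sum.elim d d k) :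
    ∃ c δ : ℝ, 0 < c ∧ 0 < δ ∧ ∀ t, 0 ≤ t →
      ∑ i, w i * |Sum.elim zR zI i t - Sum.elim zbR zbI i| ≤ c * exp (-δ * t) := by
  have hZ : ∀ i, Differentiable ℝ (Sum.elim zR zI i) :=
    Sum.forall.2 ⟨fun j => (hz.1 j).differentiable one_ne_zero,
      fun j => (hz.2.1 j).differentiable one_ne_zero⟩
  exact exists_weighted_sum_abs_le_exp_of_delay_diffIneq hw
    (lipMatrix_nonneg (fun k => (hg k).nonneg.1) (fun k => (hg k).nonneg.2.1)
      (fun k => (hg k).nonneg.2.2.1) (fun k => (hg k).nonneg.2.2.2)) (fun i k => hτ _ _)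
    (fun i => (hZ i).sub_const _)
    (hz.abs_deriv_add_le hzb hf hg) hcol

theorem colSum_lipMatrix_lt {ξ φ : Fin n → ℝ} {lRR lRI lIR lII mRR mRI mIR mII : Fin n → ℝ}
    (hT11 : ∀ k : Fin n,
      -(ξ k) * d k
      + ((∑ j, ξ j * |aR j k|) + (∑ j, φ j * |aI j k|)) * lRR k
      + ((∑ j, ξ j * |aI j k|) + (∑ j, φ j * |aR j k|)) * lIR k
      + (∑ j, (ξ j * (|bR j k| * mRR k + |bI j k| * mIR k)
               + φ j * (|bR j k| * mIR k + |bI j k| * mRR k))) < 0)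
    (hT12 : ∀ k : Fin n,
      -(φ k) * d k
      + ((∑ j, φ j * |aR j k|) + (∑ j, ξ j * |aI j k|)) * lII k
      + ((∑ j, φ j * |aI j k|) + (∑ j, ξ j * |aR j k|)) * lRI k
      + (∑ j, (ξ j * (|bR j k| * mRI k + |bI j k| * mII k)
               + φ j * (|bR j k| * mII k + |bI j k| * mRI k))) < 0)
    (k : Fin n ⊕ Fin n) :
    ∑ i, Sum.elim ξ φ i * lipMatrix aR aI lRR lRI lIR lII i k
      + ∑ i, Sum.elim ξ φ i * lipMatrix bR bI mRR mRI mIR mII i k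
      < Sum.elim ξ φ k * Sum.elim d d k := by
  rcases k with k | k <;> [have h := hT11 k; have h := hT12 k] <;>
    simp only [Fintype.sum_sum_type, Sum.elim_inl, Sum.elim_inr, lipMatrix, mul_add,
      sum_add_distrib, ← mul_assoc, ← sum_mul] at h ⊢ <;>
    linarith

end Network

theorem stmt5_general
    (n : ℕ)
    (d : Fin n → ℝ) (hd : ∀ j, 0 < d j)
    (aR aI bR bI τ : Fin n → Fin n → ℝ) (hτ : ∀ j k, 0 ≤ τ j k)
    (uR uI : Fin n → ℝ)
    (fR fI gR gI : Fin n → ℝ → ℝ → ℝ)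
    (lRR lRI lIR lII mRR mRI mIR mII : Fin n → ℝ)
    (hf : ∀ j, CondH2 (fR j) (fI j) (lRR j) (lRI j) (lIR j) (lII j))
    (hg : ∀ j, CondH2 (gR j) (gI j) (mRR j) (mRI j) (mIR j) (mII j))
    (ξ φ : Fin n → ℝ) (hξ : ∀ j, 0 < ξ j) (hφ : ∀ j, 0 < φ j)
    (hT11 : ∀ k : Fin n,
      -(ξ k) * d k
      + ((∑ j, ξ j * |aR j k|) + (∑ j, φ j * |aI j k|)) * lRR k
      + ((∑ j, ξ j * |aI j k|) + (∑ j, φ j * |aR j k|)) * lIR k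
      + (∑ j, (ξ j * (|bR j k| * mRR k + |bI j k| * mIR k)
               + φ j * (|bR j k| * mIR k + |bI j k| * mRR k))) < 0)
    (hT12 : ∀ k : Fin n,
      -(φ k) * d k
      + ((∑ j, φ j * |aR j k|) + (∑ j, ξ j * |aI j k|)) * lII k
      + ((∑ j, φ j * |aI j k|) + (∑ j, ξ j * |aR j k|)) * lRI k
      + (∑ j, (ξ j * (|bR j k| * mRI k + |bI j k| * mII k)
               + φ j * (|bR j k| * mII k + |bI j k| * mRI k))) < 0) :
    ∃ zbR zbI : Fin n → ℝ,
      IsEquilibrium n d aR aI bR bI uR uI fR fI gR gI zbR zbI ∧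
      (∀ wR wI : Fin n → ℝ,
        IsEquilibrium n d aR aI bR bI uR uI fR fI gR gI wR wI → wR = zbR ∧ wI = zbI) ∧
      (∀ zR zI : Fin n → ℝ → ℝ,
        IsSolution n d aR aI bR bI τ uR uI fR fI gR gI zR zI →
        ∃ c δ : ℝ, 0 < c ∧ 0 < δ ∧ ∀ t : ℝ, 0 ≤ t →
          Real.sqrt ((∑ j, (zR j t - zbR j) ^ 2) + ∑ j, (zI j t - zbI j) ^ 2)
            ≤ c * Real.exp (-δ * t)) := by
  have hw : ∀ i, 0 < Sum.elim ξ φ i := Sum.forall.2 ⟨hξ, hφ⟩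
  have hcol := colSum_lipMatrix_lt hT11 hT12
  obtain ⟨Z, hZ, hZ_unique⟩ :=
    existsUnique_doubled_equilibrium (uR := uR) (uI := uI) hd hw hf hg hcol
  obtain ⟨zbR, zbI, rfl⟩ : ∃ zbR zbI, Sum.elim zbR zbI = Z := ⟨_, _, Sum.elim_comp_inl_inr Z⟩
  have hequiv := isEquilibrium_iff d aR aI bR bI uR uI fR fI gR gI
  have hzb := (hequiv zbR zbI).2 hZ
  refine ⟨zbR, zbI, hzb,
    fun wR wI hw' => Sum.elim_eq_iff.1 (hZ_unique _ ((hequiv wR wI).1 hw')), fun zR zI hz => ?_⟩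
  obtain ⟨c, δ, hc, hδ, hdecay⟩ :=
    hz.exists_weighted_sum_abs_sub_le_exp hzb hτ hf hg (fun i => (hw i).le) hcol
  obtain ⟨C, hC, hnorm⟩ := exists_sqrt_sum_sq_le_mul_weighted_sum hw
  refine ⟨C * c, δ, mul_pos hC hc, hδ, fun t ht => ?_⟩
  calc _ = √(∑ i, (Sum.elim zR zI i t - Sum.elim zbR zbI i) ^ 2) := by
        rw [Fintype.sum_sum_type]; rfl
    _ ≤ C * (c * exp (-δ * t)) := (hnorm _).trans (by gcongr; exact hdecay t ht)
    _ = C * c * exp (-δ * t) := by ring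

theorem stmt5
    (n : ℕ) (hn : 1 ≤ n)
    (d : Fin n → ℝ) (hd : ∀ j, 0 < d j)
    (aR aI bR bI τ : Fin n → Fin n → ℝ) (hτ : ∀ j k, 0 ≤ τ j k)
    (uR uI : Fin n → ℝ)
    (fR fI gR gI : Fin n → ℝ → ℝ → ℝ)
    (lRR lRI lIR lII mRR mRI mIR mII : Fin n → ℝ)
    (hl : ∀ j, 0 < lRR j ∧ 0 < lRI j ∧ 0 < lIR j ∧ 0 < lII j)
    (hm : ∀ j, 0 < mRR j ∧ 0 < mRI j ∧ 0 < mIR j ∧ 0 < mII j)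
    (hf : ∀ j, CondH2 (fR j) (fI j) (lRR j) (lRI j) (lIR j) (lII j))
    (hg : ∀ j, CondH2 (gR j) (gI j) (mRR j) (mRI j) (mIR j) (mII j))
    (ξ φ : Fin n → ℝ) (hξ : ∀ j, 0 < ξ j) (hφ : ∀ j, 0 < φ j)
    (hT11 : ∀ k : Fin n,
      -(ξ k) * d k
      + ((∑ j, ξ j * |aR j k|) + (∑ j, φ j * |aI j k|)) * lRR k
      + ((∑ j, ξ j * |aI j k|) + (∑ j, φ j * |aR j k|)) * lIR k
      + (∑ j, (ξ j * (|bR j k| * mRR k + |bI j k| * mIR k)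
               + φ j * (|bR j k| * mIR k + |bI j k| * mRR k))) < 0)
    (hT12 : ∀ k : Fin n,
      -(φ k) * d k
      + ((∑ j, φ j * |aR j k|) + (∑ j, ξ j * |aI j k|)) * lII k
      + ((∑ j, φ j * |aI j k|) + (∑ j, ξ j * |aR j k|)) * lRI k
      + (∑ j, (ξ j * (|bR j k| * mRI k + |bI j k| * mII k)
               + φ j * (|bR j k| * mII k + |bI j k| * mRI k))) < 0)
    (hsol : ∃ zR zI, IsSolution n d aR aI bR bI τ uR uI fR fI gR gI zR zI) :
    ∃ zbR zbI : Fin n → ℝ,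
      IsEquilibrium n d aR aI bR bI uR uI fR fI gR gI zbR zbI ∧
      (∀ wR wI : Fin n → ℝ,
        IsEquilibrium n d aR aI bR bI uR uI fR fI gR gI wR wI → wR = zbR ∧ wI = zbI) ∧
      (∀ zR zI : Fin n → ℝ → ℝ,
        IsSolution n d aR aI bR bI τ uR uI fR fI gR gI zR zI →
        ∃ c δ : ℝ, 0 < c ∧ 0 < δ ∧ ∀ t : ℝ, 0 ≤ t →
          Real.sqrt ((∑ j, (zR j t - zbR j) ^ 2) + ∑ j, (zI j t - zbI j) ^ 2)
            ≤ c * Real.exp (-δ * t)) :=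
  stmt5_general n d hd aR aI bR bI τ hτ uR uI fR fI gR gI lRR lRI lIR lII mRR mRI mIR mII hf hg ξ φ
    hξ hφ hT11 hT12
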